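/- arXiv:2010.11382 — 3 statements merged into one kernel-verified Lean document; each statement's English description precedes it below -/
import Mathlib

section
/- Let X be a metric space, let A ⊆ X be a closed set, and let (B_i)_{i ∈ ι} be a family of closed bounded subsets of X such that B_i ∩ A ≠ ∅ for every i ∈ ι, and such that for every ε > 0 the set {i ∈ ι : diam(B_i) ≥ ε} is finite. Then the union A ∪ ⋃_{i ∈ ι} B_i is a closed subset of X. -/
/-- If `A` is closed, each `B i` is closed, bounded, and meets `A`, and for every `ε > 0`
only finitely many `B i` have diameter at least `ε`, then `A ∪ ⋃ i, B i` is closed. -/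
theorem closed_union_of_shrinking_closed_sets
    {X : Type*} {ι : Type*} [MetricSpace X]
    (A : Set X) (hA : IsClosed A)
    (B : ι → Set X) (hBclosed : ∀ i, IsClosed (B i))
    (hBbdd : ∀ i, Bornology.IsBounded (B i))
    (hBA : ∀ i, (B i ∩ A).Nonempty)
    (hfin : ∀ ε > (0 : ℝ), {i : ι | ε ≤ Metric.diam (B i)}.Finite) :
    IsClosed (A ∪ ⋃ i, B i) := by
  rw [← isOpen_compl_iff]
  rw [isOpen_iff_mem_nhds]
  intro x hx
  -- x ∉ A, and A closed, so a ball around x misses A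
  have hxA : x ∉ A := fun h => hx (Or.inl h)
  obtain ⟨ε, hε, hball⟩ : ∃ ε > 0, Metric.ball x ε ∩ A = ∅ := by
    have : Aᶜ ∈ nhds x := hA.isOpen_compl.mem_nhds hxA
    obtain ⟨ε, hε, h⟩ := Metric.mem_nhds_iff.mp this
    exact ⟨ε, hε, Set.eq_empty_of_subset_empty fun y ⟨hy1, hy2⟩ => h hy1 hy2⟩
  set F := {i : ι | ε / 2 ≤ Metric.diam (B i)} with hF
  have hFfin : F.Finite := hfin (ε / 2) (by linarith)
  -- the closed set T = A ∪ ⋃ i ∈ F, B i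
  have hT : IsClosed (A ∪ ⋃ i ∈ F, B i) :=
    hA.union (hFfin.isClosed_biUnion fun i _ => hBclosed i)
  have hxT : x ∉ A ∪ ⋃ i ∈ F, B i := by
    intro h
    rcases h with h | h
    · exact hxA h
    · exact hx (Or.inr (Set.mem_iUnion.mpr (by
        obtain ⟨i, _, hi⟩ := Set.mem_iUnion₂.mp h; exact ⟨i, hi⟩)))
  have : (A ∪ ⋃ i ∈ F, B i)ᶜ ∈ nhds x := hT.isOpen_compl.mem_nhds hxT
  obtain ⟨δ, hδ, hδball⟩ := Metric.mem_nhds_iff.mp this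
  refine Metric.mem_nhds_iff.mpr ⟨min δ (ε / 2), lt_min hδ (by linarith), ?_⟩
  intro y hy
  simp only [Metric.mem_ball, lt_min_iff] at hy
  intro hyS
  rcases hyS with hyA | hyB
  · exact hδball (Metric.mem_ball.mpr hy.1) (Or.inl hyA)
  · obtain ⟨i, hyi⟩ := Set.mem_iUnion.mp hyB
    by_cases hiF : i ∈ F
    · exact hδball (Metric.mem_ball.mpr hy.1)
        (Or.inr (Set.mem_biUnion hiF hyi))
    · -- diam (B i) < ε/2, and B i meets A, contradiction with ball x ε ∩ A = ∅
      obtain ⟨a, haB, haA⟩ := hBA i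
      have hya : dist y a ≤ Metric.diam (B i) := Metric.dist_le_diam_of_mem (hBbdd i) hyi haB
      have hdiam : Metric.diam (B i) < ε / 2 := lt_of_not_ge hiF
      have : dist x a < ε := by
        calc dist x a ≤ dist x y + dist y a := dist_triangle x y a
        _ < ε / 2 + ε / 2 := by rw [dist_comm x y]; exact add_lt_add hy.2 (lt_of_le_of_lt hya hdiam)
        _ = ε := by ring
      exact Set.eq_empty_iff_forall_notMem.mp hball a ⟨Metric.mem_ball'.mpr this, haA⟩
end

section
/- Let S be the unit circle {z ∈ ℂ : |z| = 1} and D the closed unit disk {z ∈ ℂ : |z| ≤ 1}. Let a₁, b₁, a₂, b₂ ∈ S be four distinct points such that the pairs {a₁, b₁} and {a₂, b₂} are linked, i.e., a₂ and b₂ lie in different connected components of S \ {a₁, b₁}. Let γ₁ : [0,1] → D be a continuous path from a₁ to b₁ and γ₂ : [0,1] → D a continuous path from a₂ to b₂. Then the images of γ₁ and γ₂ intersect: there exist s, t ∈ [0,1] with γ₁(s) = γ₂(t). -/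
open Complex Finset Real

/-! ### Auxiliary lemmas -/

private lemma lpd_expabs (z : ℂ) (hz : z ≠ 0) :
    Complex.exp ((Complex.arg z : ℂ) * Complex.I) * (‖z‖ : ℂ) = z := by
  rw [mul_comm]; exact Complex.norm_mul_exp_arg_mul_I z

/-- Telescoping argument-sum formula. -/
private lemma lpd_tele (f : ℕ → ℂ) (n : ℕ) (hf : ∀ j, j ≤ n → f j ≠ 0) :
    Complex.exp ((↑(Complex.arg (f 0) + ∑ j ∈ Finset.range n, Complex.arg (f (j+1) / f j)) : ℂ) * Complex.I)
      * (‖(f n)‖ : ℂ) = f n := by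
  induction n with
  | zero => simpa using lpd_expabs (f 0) (hf 0 le_rfl)
  | succ n ih =>
    have hfn : f n ≠ 0 := hf n (Nat.le_succ n)
    have hfn1 : f (n+1) ≠ 0 := hf (n+1) le_rfl
    have ih' := ih (fun j hj => hf j (hj.trans (Nat.le_succ n)))
    have hsum : (↑(Complex.arg (f 0) + ∑ j ∈ Finset.range (n+1), Complex.arg (f (j+1) / f j)) : ℂ)
        = (↑(Complex.arg (f 0) + ∑ j ∈ Finset.range n, Complex.arg (f (j+1) / f j)) : ℂ)
          + (Complex.arg (f (n+1) / f n) : ℂ) := by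
      rw [Finset.sum_range_succ]; push_cast; ring
    rw [hsum, add_mul, Complex.exp_add]
    have hq := lpd_expabs (f (n+1) / f n) (div_ne_zero hfn1 hfn)
    have habs : (‖(f (n+1))‖ : ℂ) =
        (‖(f (n+1) / f n)‖ : ℂ) * (‖(f n)‖ : ℂ) := by
      rw [norm_div]
      have : ‖(f n)‖ ≠ 0 := norm_ne_zero_iff.mpr hfn
      push_cast
      rw [div_mul_cancel₀ _ (Complex.ofReal_ne_zero.mpr this)]
    rw [habs]
    calc Complex.exp ((↑(Complex.arg (f 0) + ∑ j ∈ Finset.range n, Complex.arg (f (j+1) / f j)) : ℂ) * Complex.I) *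
          Complex.exp ((Complex.arg (f (n+1) / f n) : ℂ) * Complex.I) *
          ((‖(f (n+1) / f n)‖ : ℂ) * (‖(f n)‖ : ℂ))
        = (Complex.exp ((↑(Complex.arg (f 0) + ∑ j ∈ Finset.range n, Complex.arg (f (j+1) / f j)) : ℂ) * Complex.I) * (‖(f n)‖ : ℂ)) *
          (Complex.exp ((Complex.arg (f (n+1) / f n) : ℂ) * Complex.I) * (‖(f (n+1) / f n)‖ : ℂ)) := by ring
      _ = f n * (f (n+1) / f n) := by rw [hq, ih']
      _ = f (n+1) := by field_simp

private lemma lpd_re_div_pos {z w : ℂ} (hw : w ≠ 0) (h : ‖(z - w)‖ < ‖w‖) :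
    0 < (z / w).re := by
  have h1 : z / w = 1 + (z - w) / w := by field_simp; ring
  have h2 : ‖((z - w) / w)‖ < 1 := by
    rw [norm_div, div_lt_one (norm_pos_iff.mpr hw)]
    exact h
  have h3 : |((z - w) / w).re| ≤ ‖((z - w) / w)‖ := Complex.abs_re_le_norm _
  rw [h1]
  simp only [Complex.add_re, Complex.one_re]
  nlinarith [abs_le.mp h3]

private lemma lpd_halfplane {a z : ℂ} (ha : ‖a‖ = 1) (hz : ‖z‖ ≤ 1)
    (hne : z ≠ a) : 0 < ((a - z) * (starRingEnd ℂ) a).re := by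
  have h1 : Complex.normSq a = 1 := by
    have := Complex.sq_norm a; rw [ha] at this; simpa using this.symm
  have h2 : Complex.normSq z ≤ 1 := by
    have := Complex.sq_norm z; nlinarith [norm_nonneg z]
  have h3 : 0 < Complex.normSq (a - z) := Complex.normSq_pos.mpr (sub_ne_zero.mpr (Ne.symm hne))
  simp only [Complex.normSq_apply, Complex.mul_re, Complex.sub_re, Complex.sub_im,
    Complex.conj_re, Complex.conj_im] at *
  nlinarith

private lemma lpd_near_of_cos_pos {x : ℝ} (h : 0 < Real.cos x) :
    |x - 2*π*(round (x/(2*π)))| < π/2 := by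
  set k := round (x/(2*π)) with hk
  have hπ : (0:ℝ) < π := Real.pi_pos
  have h1 : |x/(2*π) - k| ≤ 1/2 := abs_sub_round _
  have h2 : |x - 2*π*k| ≤ π := by
    have e : x - 2*π*k = (x/(2*π) - k) * (2*π) := by field_simp
    rw [e, abs_mul, abs_of_pos (by linarith : (0:ℝ) < 2*π)]
    nlinarith [abs_nonneg (x/(2*π) - (k:ℝ))]
  by_contra hcon
  push_neg at hcon
  have h3 : Real.cos (x - 2*π*k) = Real.cos x := by
    have e : x - 2*π*k = x - k*(2*π) := by ring
    rw [e, Real.cos_sub_int_mul_two_pi]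
  have h4 : Real.cos |x - 2*π*k| ≤ 0 := by
    apply Real.cos_nonpos_of_pi_div_two_le_of_le hcon
    linarith
  rw [Real.cos_abs, h3] at h4
  linarith

private lemma lpd_quarter {y : ℝ} {k : ℤ} (h : |y - 2*π*k| < π/2) : |y/(2*π) - k| < 1/4 := by
  have hπ : (0:ℝ) < π := Real.pi_pos
  have h2π : (0:ℝ) < 2*π := by linarith
  have e : y/(2*π) - k = (y - 2*π*k)/(2*π) := by field_simp
  rw [e, abs_div, abs_of_pos h2π, div_lt_iff₀ h2π]
  calc |y - 2*π*k| < π/2 := h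
    _ = 1/4 * (2*π) := by ring

/-- A continuous real function whose cosine is positive on `[0,1]` stays in one strip. -/
private lemma lpd_strip (φ : ℝ → ℝ) (hφ : Continuous φ)
    (hc : ∀ t ∈ Set.Icc (0:ℝ) 1, 0 < Real.cos (φ t)) :
    ∃ k : ℤ, ∀ t ∈ Set.Icc (0:ℝ) 1, |φ t - 2*π*k| < π/2 := by
  have hπ : (0:ℝ) < π := Real.pi_pos
  set r : ℝ → ℤ := fun t => round (φ t / (2*π)) with hr
  have main : ∀ t₁ ∈ Set.Icc (0:ℝ) 1, ∀ t₂ ∈ Set.Icc (0:ℝ) 1, r t₁ < r t₂ → False := by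
    intro t₁ ht₁ t₂ ht₂ hlt
    have e1 : |φ t₁/(2*π) - r t₁| < 1/4 := lpd_quarter (lpd_near_of_cos_pos (hc t₁ ht₁))
    have e2 : |φ t₂/(2*π) - r t₂| < 1/4 := lpd_quarter (lpd_near_of_cos_pos (hc t₂ ht₂))
    rw [abs_sub_lt_iff] at e1 e2
    have hk : (r t₁ : ℝ) + 1 ≤ r t₂ := by exact_mod_cast Int.add_one_le_iff.mpr hlt
    have hmem : ((r t₁:ℝ) + 1/2) ∈ Set.uIcc (φ t₁ / (2*π)) (φ t₂ / (2*π)) := by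
      rw [Set.mem_uIcc]
      left
      constructor <;> linarith [e1.1, e1.2, e2.1, e2.2]
    have hcont : ContinuousOn (fun x => φ x / (2*π)) (Set.uIcc t₁ t₂) :=
      (hφ.div_const _).continuousOn
    obtain ⟨x, hx, hfx⟩ := intermediate_value_uIcc hcont hmem
    have hxI : x ∈ Set.Icc (0:ℝ) 1 := Set.uIcc_subset_Icc ht₁ ht₂ hx
    have hval : φ x = π + (r t₁) * (2*π) := by
      have h2π : (2*π) ≠ 0 := by positivity
      simp only at hfx
      field_simp at hfx
      linarith
    have hpos := hc x hxI
    rw [hval, Real.cos_add_int_mul_two_pi, Real.cos_pi] at hpos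
    linarith
  have h0 : (0:ℝ) ∈ Set.Icc (0:ℝ) 1 := by constructor <;> norm_num
  refine ⟨r 0, fun t ht => ?_⟩
  have key : r t = r 0 := by
    rcases lt_trichotomy (r t) (r 0) with h|h|h
    · exact absurd (main t ht 0 h0 h) not_false
    · exact h
    · exact absurd (main 0 h0 t ht h) not_false
  rw [← key]
  exact lpd_near_of_cos_pos (hc t ht)

private lemma lpd_cos_pos_of_re_pos {θ α : ℝ} {h w : ℂ} (hh : h ≠ 0)
    (hE : Complex.exp ((θ:ℂ) * Complex.I) * (‖h‖ : ℂ) = h)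
    (hw : Complex.exp ((α:ℂ) * Complex.I) = w)
    (hre : 0 < (h * (starRingEnd ℂ) w).re) :
    0 < Real.cos (θ - α) := by
  have habs : (0:ℝ) < ‖h‖ := norm_pos_iff.mpr hh
  have hconj : (starRingEnd ℂ) w = Complex.exp (-((α:ℂ) * Complex.I)) := by
    rw [← hw, ← Complex.exp_conj]
    congr 1
    simp [Complex.conj_ofReal]
  have key : Complex.exp ((↑(θ - α):ℂ) * Complex.I) * (‖h‖ : ℂ)
      = h * (starRingEnd ℂ) w := by
    calc Complex.exp ((↑(θ - α):ℂ) * Complex.I) * (‖h‖ : ℂ)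
        = (Complex.exp ((θ:ℂ) * Complex.I) * (‖h‖ : ℂ)) * Complex.exp (-((α:ℂ) * Complex.I)) := by
          rw [show ((↑(θ - α):ℂ) * Complex.I) = (θ:ℂ)*Complex.I + (-((α:ℂ)*Complex.I)) by push_cast; ring,
            Complex.exp_add]
          ring
      _ = h * (starRingEnd ℂ) w := by rw [hE, hconj]
  have hre2 : Real.cos (θ - α) * ‖h‖ = (h * (starRingEnd ℂ) w).re := by
    rw [← key, show (Complex.exp ((↑(θ - α):ℂ) * Complex.I) * (‖h‖ : ℂ)).re
        = (Complex.exp ((↑(θ - α):ℂ) * Complex.I)).re * ‖h‖ by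
      rw [Complex.mul_re]; simp]
    rw [Complex.exp_ofReal_mul_I_re]
  nlinarith

private lemma lpd_exp_eq_exp_iff {x y : ℝ} :
    Complex.exp ((x:ℂ)*Complex.I) = Complex.exp ((y:ℂ)*Complex.I) ↔ ∃ n : ℤ, x = y + 2*π*n := by
  rw [Complex.exp_eq_exp_iff_exists_int]
  constructor
  · rintro ⟨n, hn⟩
    refine ⟨n, ?_⟩
    have hI : ((x:ℂ))*Complex.I = ((y + 2*π*n:ℝ):ℂ) * Complex.I := by
      push_cast; rw [hn]; ring
    have := mul_right_cancel₀ Complex.I_ne_zero hI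
    exact_mod_cast this
  · rintro ⟨n, hn⟩
    exact ⟨n, by rw [hn]; push_cast; ring⟩

private lemma lpd_min_grid {t a b : ℝ} (hab : a ≤ b) : |min t b - min t a| ≤ b - a := by
  rw [abs_le]
  constructor
  · have : min t a ≤ min t b := min_le_min (le_refl t) hab
    linarith
  · have h1 : min t b ≤ min (t + (b - a)) (a + (b - a)) := by
      apply min_le_min (by linarith) (by linarith)
    rw [min_add_add_right] at h1
    linarith

set_option maxHeartbeats 1600000 in
/-- If two pairs of boundary points of the closed unit disk are linked on the unit circle,
then any two paths in the disk joining the respective pairs must intersect. -/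
theorem linked_paths_in_disk_intersect
    (S D : Set ℂ) (hS : S = {z : ℂ | ‖z‖ = 1})
    (hD : D = {z : ℂ | ‖z‖ ≤ 1})
    (a₁ b₁ a₂ b₂ : ℂ)
    (ha₁ : a₁ ∈ S) (hb₁ : b₁ ∈ S) (ha₂ : a₂ ∈ S) (hb₂ : b₂ ∈ S)
    (hab : a₁ ≠ b₁) (haa : a₁ ≠ a₂) (hab' : a₁ ≠ b₂)
    (hba : b₁ ≠ a₂) (hbb : b₁ ≠ b₂) (hab'' : a₂ ≠ b₂)
    (hlink : connectedComponentIn (S \ {a₁, b₁}) a₂ ≠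
      connectedComponentIn (S \ {a₁, b₁}) b₂)
    (γ₁ γ₂ : ℝ → ℂ)
    (hγ₁cont : ContinuousOn γ₁ (Set.Icc 0 1))
    (hγ₁D : Set.MapsTo γ₁ (Set.Icc 0 1) D)
    (hγ₁0 : γ₁ 0 = a₁) (hγ₁1 : γ₁ 1 = b₁)
    (hγ₂cont : ContinuousOn γ₂ (Set.Icc 0 1))
    (hγ₂D : Set.MapsTo γ₂ (Set.Icc 0 1) D)
    (hγ₂0 : γ₂ 0 = a₂) (hγ₂1 : γ₂ 1 = b₂) :
    ∃ s ∈ Set.Icc (0 : ℝ) 1, ∃ t ∈ Set.Icc (0 : ℝ) 1, γ₁ s = γ₂ t := by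
  by_contra hcon
  push_neg at hcon
  have hπ : (0:ℝ) < π := Real.pi_pos
  have hI0 : (0:ℝ) ∈ Set.Icc (0:ℝ) 1 := ⟨le_refl 0, zero_le_one⟩
  have hI1 : (1:ℝ) ∈ Set.Icc (0:ℝ) 1 := ⟨zero_le_one, le_refl 1⟩
  have habs₁ : ‖a₁‖ = 1 := by rw [hS] at ha₁; exact ha₁
  have habs₂ : ‖b₁‖ = 1 := by rw [hS] at hb₁; exact hb₁
  have habs₃ : ‖a₂‖ = 1 := by rw [hS] at ha₂; exact ha₂
  have habs₄ : ‖b₂‖ = 1 := by rw [hS] at hb₂; exact hb₂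
  -- clamp function
  set c : ℝ → ℝ := fun x => min 1 (max 0 x) with hc
  have hc_mem : ∀ x, c x ∈ Set.Icc (0:ℝ) 1 := fun x =>
    ⟨le_min (by norm_num) (le_max_left 0 x), min_le_left _ _⟩
  have hc_id : ∀ x ∈ Set.Icc (0:ℝ) 1, c x = x := by
    intro x hx
    simp only [hc]
    rw [max_eq_right hx.1, min_eq_right hx.2]
  have hc_cont : Continuous c := continuous_const.min (continuous_const.max continuous_id)
  have hc_lip : ∀ x y, |c x - c y| ≤ |x - y| := by
    intro x y
    calc |c x - c y| ≤ max |(1:ℝ) - 1| |max 0 x - max 0 y| :=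
          abs_min_sub_min_le_max 1 (max 0 x) 1 (max 0 y)
      _ = |max 0 x - max 0 y| := by simp
      _ ≤ max |(0:ℝ) - 0| |x - y| := abs_max_sub_max_le_max 0 x 0 y
      _ = |x - y| := by simp
  set g₁ : ℝ → ℂ := fun x => γ₁ (c x) with hg₁
  set g₂ : ℝ → ℂ := fun x => γ₂ (c x) with hg₂
  have hg₁cont : Continuous g₁ := hγ₁cont.comp_continuous hc_cont hc_mem
  have hg₂cont : Continuous g₂ := hγ₂cont.comp_continuous hc_cont hc_mem
  have hg₁id : ∀ x ∈ Set.Icc (0:ℝ) 1, g₁ x = γ₁ x := fun x hx => by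
    simp only [hg₁]; rw [hc_id x hx]
  have hg₂id : ∀ x ∈ Set.Icc (0:ℝ) 1, g₂ x = γ₂ x := fun x hx => by
    simp only [hg₂]; rw [hc_id x hx]
  have hne : ∀ s t : ℝ, g₁ s - g₂ t ≠ 0 := fun s t =>
    sub_ne_zero.mpr (hcon _ (hc_mem s) _ (hc_mem t))
  -- minimum distance m
  obtain ⟨p₀, hp₀K, hp₀⟩ : ∃ p₀ ∈ (Set.Icc (0:ℝ) 1) ×ˢ (Set.Icc (0:ℝ) 1),
      ∀ q ∈ (Set.Icc (0:ℝ) 1) ×ˢ (Set.Icc (0:ℝ) 1),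
        ‖(g₁ p₀.1 - g₂ p₀.2)‖ ≤ ‖(g₁ q.1 - g₂ q.2)‖ := by
    obtain ⟨q₀, hq₀K, hq₀min⟩ := (isCompact_Icc.prod isCompact_Icc).exists_isMinOn
      (Set.Nonempty.prod ⟨0, hI0⟩ ⟨0, hI0⟩)
      ((continuous_norm.comp
        ((hg₁cont.comp continuous_fst).sub (hg₂cont.comp continuous_snd))).continuousOn)
    exact ⟨q₀, hq₀K, fun q hq => hq₀min hq⟩
  set m : ℝ := ‖(g₁ p₀.1 - g₂ p₀.2)‖ with hm_def
  have hm : 0 < m := norm_pos_iff.mpr (hne _ _)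
  have hmle : ∀ s t : ℝ, m ≤ ‖(g₁ s - g₂ t)‖ := by
    intro s t
    have e1 : g₁ s = g₁ (c s) := by simp only [hg₁]; rw [hc_id (c s) (hc_mem s)]
    have e2 : g₂ t = g₂ (c t) := by simp only [hg₂]; rw [hc_id (c t) (hc_mem t)]
    rw [e1, e2]
    exact hp₀ (c s, c t) (Set.mk_mem_prod (hc_mem s) (hc_mem t))
  -- uniform continuity (after clamping) for both paths
  have huc1 : ∃ δ > 0, ∀ x y : ℝ, |x - y| < δ → ‖(g₁ x - g₁ y)‖ < m := by
    have := isCompact_Icc.uniformContinuousOn_of_continuous (s := Set.Icc (0:ℝ) 1) hγ₁cont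
    rw [Metric.uniformContinuousOn_iff] at this
    obtain ⟨δ, hδ, hδ'⟩ := this m hm
    refine ⟨δ, hδ, fun x y hxy => ?_⟩
    have h1 : dist (c x) (c y) < δ := by
      rw [Real.dist_eq]
      exact lt_of_le_of_lt (hc_lip x y) hxy
    have h2 := hδ' (c x) (hc_mem x) (c y) (hc_mem y) h1
    rw [Complex.dist_eq] at h2
    simpa [hg₁] using h2
  have huc2 : ∃ δ > 0, ∀ x y : ℝ, |x - y| < δ → ‖(g₂ x - g₂ y)‖ < m := by
    have := isCompact_Icc.uniformContinuousOn_of_continuous (s := Set.Icc (0:ℝ) 1) hγ₂cont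
    rw [Metric.uniformContinuousOn_iff] at this
    obtain ⟨δ, hδ, hδ'⟩ := this m hm
    refine ⟨δ, hδ, fun x y hxy => ?_⟩
    have h1 : dist (c x) (c y) < δ := by
      rw [Real.dist_eq]
      exact lt_of_le_of_lt (hc_lip x y) hxy
    have h2 := hδ' (c x) (hc_mem x) (c y) (hc_mem y) h1
    rw [Complex.dist_eq] at h2
    simpa [hg₂] using h2
  obtain ⟨δ₁, hδ₁, hδ₁'⟩ := huc1
  obtain ⟨δ₂, hδ₂, hδ₂'⟩ := huc2
  set δ : ℝ := min δ₁ δ₂ with hδdef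
  have hδ : 0 < δ := lt_min hδ₁ hδ₂
  obtain ⟨n₀, hn₀⟩ := exists_nat_one_div_lt hδ
  set N : ℕ := n₀ + 1 with hN
  have hNpos : (0:ℝ) < (N:ℝ) := by positivity
  have hNne : (N:ℝ) ≠ 0 := ne_of_gt hNpos
  have hNinv : 1/(N:ℝ) < δ := by
    have : ((n₀:ℝ) + 1) = (N:ℝ) := by push_cast [hN]; ring
    rw [← this]; exact hn₀
  -- grid increments are small
  have hgrid : ∀ (x : ℝ) (j : ℕ),
      |min x ((↑(j+1):ℝ)/N) - min x ((j:ℝ)/N)| < δ := by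
    intro x j
    have h1 : ((j:ℝ))/N ≤ (↑(j+1):ℝ)/N := by gcongr; omega
    calc |min x ((↑(j+1):ℝ)/N) - min x ((j:ℝ)/N)| ≤ (↑(j+1):ℝ)/N - (j:ℝ)/N :=
          lpd_min_grid h1
      _ = 1/(N:ℝ) := by rw [div_sub_div_same]; push_cast; ring_nf
      _ < δ := hNinv
  -- telescoping families
  set F1 : ℝ → ℕ → ℂ := fun s j => g₁ (min s ((j:ℝ)/N)) - g₂ 0 with hF1
  set F2 : ℝ → ℝ → ℕ → ℂ := fun s t j => g₁ s - g₂ (min t ((j:ℝ)/N)) with hF2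
  have hF1ne : ∀ s j, F1 s j ≠ 0 := fun s j => hne _ _
  have hF2ne : ∀ s t j, F2 s t j ≠ 0 := fun s t j => hne _ _
  -- positivity of real parts of the quotients
  have hv1 : ∀ (s : ℝ) (j : ℕ), 0 < (F1 s (j+1) / F1 s j).re := by
    intro s j
    apply lpd_re_div_pos (hF1ne s j)
    have e : F1 s (j+1) - F1 s j = g₁ (min s ((↑(j+1):ℝ)/N)) - g₁ (min s ((j:ℝ)/N)) := by
      simp only [hF1]; ring
    rw [e]
    calc ‖(g₁ (min s ((↑(j+1):ℝ)/N)) - g₁ (min s ((j:ℝ)/N)))‖ < m :=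
          hδ₁' _ _ (lt_of_lt_of_le (hgrid s j) (min_le_left δ₁ δ₂))
      _ ≤ ‖(F1 s j)‖ := hmle _ _
  have hv2 : ∀ (s t : ℝ) (j : ℕ), 0 < (F2 s t (j+1) / F2 s t j).re := by
    intro s t j
    apply lpd_re_div_pos (hF2ne s t j)
    have e : F2 s t (j+1) - F2 s t j
        = g₂ (min t ((j:ℝ)/N)) - g₂ (min t ((↑(j+1):ℝ)/N)) := by
      simp only [hF2]; ring
    rw [e]
    have hd : |min t ((j:ℝ)/N) - min t ((↑(j+1):ℝ)/N)| < δ := by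
      rw [abs_sub_comm]; exact hgrid t j
    calc ‖(g₂ (min t ((j:ℝ)/N)) - g₂ (min t ((↑(j+1):ℝ)/N)))‖ < m :=
          hδ₂' _ _ (lt_of_lt_of_le hd (min_le_right δ₁ δ₂))
      _ ≤ ‖(F2 s t j)‖ := hmle _ _
  -- the first member of the row family is constant
  have hF10 : ∀ s : ℝ, F1 s 0 = g₁ 0 - g₂ 0 := by
    intro s
    have h1 : c (min s 0) = 0 := by
      simp only [hc]
      rw [max_eq_left (min_le_right s 0), min_eq_right zero_le_one]
    have h2 : c 0 = 0 := hc_id 0 hI0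
    have h3 : g₁ (min s 0) = g₁ 0 := by simp only [hg₁]; rw [h1, h2]
    simp only [hF1, Nat.cast_zero, zero_div]
    rw [h3]
  -- the angle lift
  set θ : ℝ → ℝ → ℝ := fun s t =>
    Complex.arg (F1 s 0)
      + ∑ j ∈ Finset.range N, Complex.arg (F1 s (j+1) / F1 s j)
      + ∑ j ∈ Finset.range N, Complex.arg (F2 s t (j+1) / F2 s t j) with hθ
  -- the key lifting equation
  have hkey : ∀ s ∈ Set.Icc (0:ℝ) 1, ∀ t ∈ Set.Icc (0:ℝ) 1,
      Complex.exp ((θ s t : ℂ) * Complex.I) * (‖(g₁ s - g₂ t)‖ : ℂ)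
        = g₁ s - g₂ t := by
    intro s hs t ht
    have e1N : F1 s N = g₁ s - g₂ 0 := by
      simp only [hF1]
      rw [div_self hNne, min_eq_left hs.2]
    have e20 : F2 s t 0 = g₁ s - g₂ 0 := by
      have h1 : c (min t 0) = 0 := by
        simp only [hc]
        rw [max_eq_left (min_le_right t 0), min_eq_right zero_le_one]
      have h2 : g₂ (min t 0) = g₂ 0 := by simp only [hg₂]; rw [h1, hc_id 0 hI0]
      simp only [hF2, Nat.cast_zero, zero_div]
      rw [h2]
    have e2N : F2 s t N = g₁ s - g₂ t := by
      simp only [hF2]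
      rw [div_self hNne, min_eq_left ht.2]
    have t1 := lpd_tele (F1 s) N (fun j _ => hF1ne s j)
    have t2 := lpd_tele (F2 s t) N (fun j _ => hF2ne s t j)
    have habs1 : ‖(F1 s N)‖ ≠ 0 := norm_ne_zero_iff.mpr (hF1ne s N)
    have hblock : Complex.exp ((↑(Complex.arg (F1 s 0)
          + ∑ j ∈ Finset.range N, Complex.arg (F1 s (j+1) / F1 s j)) : ℂ) * Complex.I)
        = Complex.exp ((Complex.arg (F2 s t 0) : ℂ) * Complex.I) := by
      have e12 : F2 s t 0 = F1 s N := by rw [e20, e1N]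
      have h2 := lpd_expabs (F1 s N) (hF1ne s N)
      have h3 := mul_right_cancel₀ (Complex.ofReal_ne_zero.mpr habs1) (t1.trans h2.symm)
      rw [e12]
      exact h3
    have hsplit : ((θ s t : ℝ) : ℂ)
        = (↑(Complex.arg (F1 s 0)
            + ∑ j ∈ Finset.range N, Complex.arg (F1 s (j+1) / F1 s j)) : ℂ)
          + (↑(∑ j ∈ Finset.range N, Complex.arg (F2 s t (j+1) / F2 s t j)) : ℂ) := by
      simp only [hθ]; push_cast; ring
    have hcombine : (↑(Complex.arg (F2 s t 0)
          + ∑ j ∈ Finset.range N, Complex.arg (F2 s t (j+1) / F2 s t j)) : ℂ)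
        = (↑(Complex.arg (F2 s t 0)) : ℂ)
          + (↑(∑ j ∈ Finset.range N, Complex.arg (F2 s t (j+1) / F2 s t j)) : ℂ) := by
      push_cast; ring
    calc Complex.exp ((θ s t : ℂ) * Complex.I) * (‖(g₁ s - g₂ t)‖ : ℂ)
        = Complex.exp ((↑(Complex.arg (F1 s 0)
              + ∑ j ∈ Finset.range N, Complex.arg (F1 s (j+1) / F1 s j)) : ℂ) * Complex.I)
          * Complex.exp ((↑(∑ j ∈ Finset.range N, Complex.arg (F2 s t (j+1) / F2 s t j)) : ℂ)
              * Complex.I)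
          * (‖(g₁ s - g₂ t)‖ : ℂ) := by rw [hsplit, add_mul, Complex.exp_add]
      _ = Complex.exp ((↑(Complex.arg (F2 s t 0)
              + ∑ j ∈ Finset.range N, Complex.arg (F2 s t (j+1) / F2 s t j)) : ℂ) * Complex.I)
          * (‖(F2 s t N)‖ : ℂ) := by
            rw [hblock, hcombine, add_mul, Complex.exp_add, e2N]
      _ = F2 s t N := t2
      _ = g₁ s - g₂ t := e2N
  -- continuity of θ along horizontal and vertical lines
  have hθcont_t : ∀ s : ℝ, Continuous (fun t => θ s t) := by
    intro s
    apply Continuous.add continuous_const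
    apply continuous_finset_sum
    intro j _
    rw [continuous_iff_continuousAt]
    intro t₀
    have hinner : Continuous (fun t => F2 s t (j+1) / F2 s t j) := by
      apply Continuous.div
      · exact continuous_const.sub (hg₂cont.comp (continuous_id.min continuous_const))
      · exact continuous_const.sub (hg₂cont.comp (continuous_id.min continuous_const))
      · exact fun t => hF2ne s t j
    exact ContinuousAt.comp (g := Complex.arg) (Complex.continuousAt_arg
      (Complex.mem_slitPlane_iff.mpr (Or.inl (hv2 s t₀ j)))) hinner.continuousAt
  have hθcont_s : ∀ t : ℝ, Continuous (fun s => θ s t) := by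
    intro t
    apply Continuous.add
    · apply Continuous.add
      · have : (fun s => Complex.arg (F1 s 0)) = fun _ => Complex.arg (g₁ 0 - g₂ 0) :=
          funext fun s => by rw [hF10 s]
        rw [this]
        exact continuous_const
      · apply continuous_finset_sum
        intro j _
        rw [continuous_iff_continuousAt]
        intro s₀
        have hinner : Continuous (fun s => F1 s (j+1) / F1 s j) := by
          apply Continuous.div
          · exact (hg₁cont.comp (continuous_id.min continuous_const)).sub continuous_const
          · exact (hg₁cont.comp (continuous_id.min continuous_const)).sub continuous_const
          · exact fun s => hF1ne s j
        exact ContinuousAt.comp (g := Complex.arg) (Complex.continuousAt_arg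
          (Complex.mem_slitPlane_iff.mpr (Or.inl (hv1 s₀ j)))) hinner.continuousAt
    · apply continuous_finset_sum
      intro j _
      rw [continuous_iff_continuousAt]
      intro s₀
      have hinner : Continuous (fun s => F2 s t (j+1) / F2 s t j) := by
        apply Continuous.div
        · exact hg₁cont.sub continuous_const
        · exact hg₁cont.sub continuous_const
        · exact fun s => hF2ne s t j
      exact ContinuousAt.comp (g := Complex.arg) (Complex.continuousAt_arg
        (Complex.mem_slitPlane_iff.mpr (Or.inl (hv2 s₀ t j)))) hinner.continuousAt
  -- endpoint values of g
  have hg₁0v : g₁ 0 = a₁ := by rw [hg₁id 0 hI0, hγ₁0]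
  have hg₁1v : g₁ 1 = b₁ := by rw [hg₁id 1 hI1, hγ₁1]
  have hg₂0v : g₂ 0 = a₂ := by rw [hg₂id 0 hI0, hγ₂0]
  have hg₂1v : g₂ 1 = b₂ := by rw [hg₂id 1 hI1, hγ₂1]
  -- exp-of-arg facts
  have hZero : ∀ z : ℂ, ‖z‖ = 1 → z ≠ 0 := by
    intro z hz h0
    rw [h0] at hz; simp at hz
  have hwa₁ : Complex.exp ((Complex.arg a₁ : ℂ) * Complex.I) = a₁ := by
    have := lpd_expabs a₁ (hZero a₁ habs₁); rwa [habs₁, Complex.ofReal_one, mul_one] at this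
  have hwb₁ : Complex.exp ((Complex.arg b₁ : ℂ) * Complex.I) = b₁ := by
    have := lpd_expabs b₁ (hZero b₁ habs₂); rwa [habs₂, Complex.ofReal_one, mul_one] at this
  have hwa₂ : Complex.exp ((Complex.arg a₂ : ℂ) * Complex.I) = a₂ := by
    have := lpd_expabs a₂ (hZero a₂ habs₃); rwa [habs₃, Complex.ofReal_one, mul_one] at this
  have hwb₂ : Complex.exp ((Complex.arg b₂ : ℂ) * Complex.I) = b₂ := by
    have := lpd_expabs b₂ (hZero b₂ habs₄); rwa [habs₄, Complex.ofReal_one, mul_one] at this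
  have hwa₂π : Complex.exp (((Complex.arg a₂ + π : ℝ) : ℂ) * Complex.I) = -a₂ := by
    push_cast
    rw [add_mul, Complex.exp_add, Complex.exp_pi_mul_I, hwa₂]
    ring
  have hwb₂π : Complex.exp (((Complex.arg b₂ + π : ℝ) : ℂ) * Complex.I) = -b₂ := by
    push_cast
    rw [add_mul, Complex.exp_add, Complex.exp_pi_mul_I, hwb₂]
    ring
  -- membership in the disk
  have hdisk₁ : ∀ s ∈ Set.Icc (0:ℝ) 1, ‖(γ₁ s)‖ ≤ 1 := by
    intro s hs; have := hγ₁D hs; rwa [hD] at this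
  have hdisk₂ : ∀ t ∈ Set.Icc (0:ℝ) 1, ‖(γ₂ t)‖ ≤ 1 := by
    intro t ht; have := hγ₂D ht; rwa [hD] at this
  -- the four edge conditions
  have hedge1 : ∀ t ∈ Set.Icc (0:ℝ) 1, 0 < Real.cos (θ 0 t - Complex.arg a₁) := by
    intro t ht
    apply lpd_cos_pos_of_re_pos (hne 0 t) (hkey 0 hI0 t ht) hwa₁
    rw [hg₁0v, hg₂id t ht]
    exact lpd_halfplane habs₁ (hdisk₂ t ht)
      (fun hq => hcon 0 hI0 t ht (hγ₁0.trans hq.symm))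
  have hedge2 : ∀ t ∈ Set.Icc (0:ℝ) 1, 0 < Real.cos (θ 1 t - Complex.arg b₁) := by
    intro t ht
    apply lpd_cos_pos_of_re_pos (hne 1 t) (hkey 1 hI1 t ht) hwb₁
    rw [hg₁1v, hg₂id t ht]
    exact lpd_halfplane habs₂ (hdisk₂ t ht)
      (fun hq => hcon 1 hI1 t ht (hγ₁1.trans hq.symm))
  have hedge3 : ∀ s ∈ Set.Icc (0:ℝ) 1, 0 < Real.cos (θ s 0 - (Complex.arg a₂ + π)) := by
    intro s hs
    apply lpd_cos_pos_of_re_pos (hne s 0) (hkey s hs 0 hI0) hwa₂π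
    rw [hg₁id s hs, hg₂0v]
    have base := lpd_halfplane habs₃ (hdisk₁ s hs)
      (fun hq => hcon s hs 0 hI0 (hq.trans hγ₂0.symm))
    have e : (γ₁ s - a₂) * (starRingEnd ℂ) (-a₂) = (a₂ - γ₁ s) * (starRingEnd ℂ) a₂ := by
      rw [map_neg]; ring
    rw [e]
    exact base
  have hedge4 : ∀ s ∈ Set.Icc (0:ℝ) 1, 0 < Real.cos (θ s 1 - (Complex.arg b₂ + π)) := by
    intro s hs
    apply lpd_cos_pos_of_re_pos (hne s 1) (hkey s hs 1 hI1) hwb₂π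
    rw [hg₁id s hs, hg₂1v]
    have base := lpd_halfplane habs₄ (hdisk₁ s hs)
      (fun hq => hcon s hs 1 hI1 (hq.trans hγ₂1.symm))
    have e : (γ₁ s - b₂) * (starRingEnd ℂ) (-b₂) = (b₂ - γ₁ s) * (starRingEnd ℂ) b₂ := by
      rw [map_neg]; ring
    rw [e]
    exact base
  -- apply the strip lemma to each edge
  obtain ⟨k₁, hk₁⟩ := lpd_strip (fun t => θ 0 t - Complex.arg a₁)
    ((hθcont_t 0).sub continuous_const) hedge1
  obtain ⟨k₂, hk₂⟩ := lpd_strip (fun t => θ 1 t - Complex.arg b₁)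
    ((hθcont_t 1).sub continuous_const) hedge2
  obtain ⟨k₃, hk₃⟩ := lpd_strip (fun s => θ s 0 - (Complex.arg a₂ + π))
    ((hθcont_s 0).sub continuous_const) hedge3
  obtain ⟨k₄, hk₄⟩ := lpd_strip (fun s => θ s 1 - (Complex.arg b₂ + π))
    ((hθcont_s 1).sub continuous_const) hedge4
  set c₁ : ℝ := Complex.arg a₁ + 2*π*k₁ with hc₁
  set d₁ : ℝ := Complex.arg b₁ + 2*π*k₂ with hd₁
  set c₂ : ℝ := Complex.arg a₂ + 2*π*k₃ with hc₂
  set d₂ : ℝ := Complex.arg b₂ + 2*π*k₄ with hd₂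
  have hec₁ : Complex.exp ((c₁ : ℂ) * Complex.I) = a₁ :=
    (lpd_exp_eq_exp_iff.mpr ⟨k₁, by rw [hc₁]⟩).trans hwa₁
  have hed₁ : Complex.exp ((d₁ : ℂ) * Complex.I) = b₁ :=
    (lpd_exp_eq_exp_iff.mpr ⟨k₂, by rw [hd₁]⟩).trans hwb₁
  have hec₂ : Complex.exp ((c₂ : ℂ) * Complex.I) = a₂ :=
    (lpd_exp_eq_exp_iff.mpr ⟨k₃, by rw [hc₂]⟩).trans hwa₂
  have hed₂ : Complex.exp ((d₂ : ℂ) * Complex.I) = b₂ :=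
    (lpd_exp_eq_exp_iff.mpr ⟨k₄, by rw [hd₂]⟩).trans hwb₂
  -- corner inequalities
  have hcor1 := abs_lt.mp (hk₁ 0 hI0)
  have hcor2 := abs_lt.mp (hk₁ 1 hI1)
  have hcor3 := abs_lt.mp (hk₂ 0 hI0)
  have hcor4 := abs_lt.mp (hk₂ 1 hI1)
  have hcor5 := abs_lt.mp (hk₃ 0 hI0)
  have hcor6 := abs_lt.mp (hk₃ 1 hI1)
  have hcor7 := abs_lt.mp (hk₄ 0 hI0)
  have hcor8 := abs_lt.mp (hk₄ 1 hI1)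
  -- θ 0 0 : edges 1 (at t=0) and 3 (at s=0)
  have hq1 : c₂ < c₁ ∧ c₁ < c₂ + 2*π := by
    constructor <;> [linarith [hcor1.1, hcor1.2, hcor5.1, hcor5.2];
      linarith [hcor1.1, hcor1.2, hcor5.1, hcor5.2]]
  -- θ 1 0 : edges 2 (at t=0) and 3 (at s=1)
  have hq2 : c₂ < d₁ ∧ d₁ < c₂ + 2*π := by
    constructor <;> [linarith [hcor3.1, hcor3.2, hcor6.1, hcor6.2];
      linarith [hcor3.1, hcor3.2, hcor6.1, hcor6.2]]
  -- θ 0 1 : edges 1 (at t=1) and 4 (at s=0)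
  have hq3 : d₂ < c₁ ∧ c₁ < d₂ + 2*π := by
    constructor <;> [linarith [hcor2.1, hcor2.2, hcor7.1, hcor7.2];
      linarith [hcor2.1, hcor2.2, hcor7.1, hcor7.2]]
  -- θ 1 1 : edges 2 (at t=1) and 4 (at s=1)
  have hq4 : d₂ < d₁ ∧ d₁ < d₂ + 2*π := by
    constructor <;> [linarith [hcor4.1, hcor4.2, hcor8.1, hcor8.2];
      linarith [hcor4.1, hcor4.2, hcor8.1, hcor8.2]]
  -- the connecting arc
  set L : ℝ → ℝ := fun x => c₂ + x*(d₂ - c₂) with hL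
  set p : ℝ → ℂ := fun x => Complex.exp ((L x : ℂ) * Complex.I) with hp
  have hp_cont : Continuous p := by
    apply Complex.continuous_exp.comp
    exact (Complex.continuous_ofReal.comp
      (continuous_const.add (continuous_id.mul continuous_const))).mul continuous_const
  have hLbound : ∀ x ∈ Set.Icc (0:ℝ) 1, min c₂ d₂ ≤ L x ∧ L x ≤ max c₂ d₂ := by
    intro x hx
    simp only [hL]
    rcases le_total c₂ d₂ with h|h
    · rw [min_eq_left h, max_eq_right h]
      constructor <;> nlinarith [hx.1, hx.2]
    · rw [min_eq_right h, max_eq_left h]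
      constructor <;> nlinarith [hx.1, hx.2]
  have key_avoid : ∀ x ∈ Set.Icc (0:ℝ) 1, ∀ e : ℝ,
      max c₂ d₂ < e → e < min c₂ d₂ + 2*π → p x ≠ Complex.exp ((e:ℂ) * Complex.I) := by
    intro x hx e he1 he2 hcontra
    rw [hp] at hcontra
    simp only at hcontra
    obtain ⟨nz, hnz⟩ := lpd_exp_eq_exp_iff.mp hcontra
    obtain ⟨hx1, hx2⟩ := hLbound x hx
    rcases le_or_gt 0 nz with h|h
    · have hcast : (0:ℝ) ≤ (nz:ℝ) := by exact_mod_cast h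
      have hA : 0 ≤ π * (nz:ℝ) := mul_nonneg hπ.le hcast
      linarith
    · have hle : nz + 1 ≤ 0 := by omega
      have hcast : (nz:ℝ) + 1 ≤ 0 := by exact_mod_cast hle
      have hA : π * ((nz:ℝ) + 1) ≤ 0 := by nlinarith [hπ.le]
      linarith
  have hmaxc₁ : max c₂ d₂ < c₁ := max_lt hq1.1 hq3.1
  have hminc₁ : c₁ < min c₂ d₂ + 2*π := by
    rcases le_total c₂ d₂ with h|h
    · rw [min_eq_left h]; exact hq1.2
    · rw [min_eq_right h]; exact hq3.2
  have hmaxd₁ : max c₂ d₂ < d₁ := max_lt hq2.1 hq4.1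
  have hmind₁ : d₁ < min c₂ d₂ + 2*π := by
    rcases le_total c₂ d₂ with h|h
    · rw [min_eq_left h]; exact hq2.2
    · rw [min_eq_right h]; exact hq4.2
  have hpS : ∀ x ∈ Set.Icc (0:ℝ) 1, p x ∈ S \ {a₁, b₁} := by
    intro x hx
    constructor
    · rw [hS]
      exact Complex.norm_exp_ofReal_mul_I (L x)
    · intro hmem
      rw [Set.mem_insert_iff, Set.mem_singleton_iff] at hmem
      rcases hmem with h|h
      · exact key_avoid x hx c₁ hmaxc₁ hminc₁ (h.trans hec₁.symm)
      · exact key_avoid x hx d₁ hmaxd₁ hmind₁ (h.trans hed₁.symm)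
  have hp0 : p 0 = a₂ := by
    have hL0 : L 0 = c₂ := by simp [hL]
    rw [hp]
    simp only
    rw [hL0, hec₂]
  have hp1 : p 1 = b₂ := by
    have hL1 : L 1 = d₂ := by simp [hL]
    rw [hp]
    simp only
    rw [hL1, hed₂]
  have himg : IsPreconnected (p '' Set.Icc 0 1) :=
    isPreconnected_Icc.image p hp_cont.continuousOn
  have hmem_a₂ : a₂ ∈ p '' Set.Icc (0:ℝ) 1 := ⟨0, hI0, hp0⟩
  have hmem_b₂ : b₂ ∈ p '' Set.Icc (0:ℝ) 1 := ⟨1, hI1, hp1⟩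
  have hsubF : p '' Set.Icc (0:ℝ) 1 ⊆ S \ {a₁, b₁} := by
    rintro z ⟨x, hx, rfl⟩
    exact hpS x hx
  have hsub := himg.subset_connectedComponentIn hmem_a₂ hsubF
  exact hlink (connectedComponentIn_eq (hsub hmem_b₂))
end

section
/- Let S be the unit circle {z ∈ ℂ : |z| = 1} and D the closed unit disk {z ∈ ℂ : |z| ≤ 1}. Let a₁, b₁, a₂, b₂ ∈ S be four distinct points such that the pairs {a₁, b₁} and {a₂, b₂} are linked, i.e., a₂ and b₂ lie in different connected components of S \ {a₁, b₁}. Let γ₁ : [0,1] → D be a continuous path from a₁ to b₁ and γ₂ : [0,1] → D a continuous path from a₂ to b₂, and suppose there are points w₁ in the image of γ₁ and w₂ in the image of γ₂ such that every common point of the images of γ₁ and γ₂ equals w₁ and equals w₂ (i.e., im(γ₁) ∩ im(γ₂) ⊆ {w₁} and im(γ₁) ∩ im(γ₂) ⊆ {w₂}). Then w₁ = w₂. -/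
set_option maxHeartbeats 1000000

open Complex Set Finset

noncomputable def tturn (a b : ℂ) : ℝ := ((starRingEnd ℂ) a * b).arg

noncomputable def cE (x : ℝ) : ℂ := Complex.exp (x * Complex.I)

lemma cE_abs (x : ℝ) : ‖cE x‖ = 1 := Complex.norm_exp_ofReal_mul_I x

lemma cE_mul (x y : ℝ) : cE x * cE y = cE (x + y) := by
  rw [cE, cE, cE, ← Complex.exp_add]; push_cast; ring_nf


lemma posre_symm {a b : ℂ} (h : 0 < ((starRingEnd ℂ) a * b).re) :
    0 < ((starRingEnd ℂ) b * a).re := by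
  have : (starRingEnd ℂ) b * a = (starRingEnd ℂ) ((starRingEnd ℂ) a * b) := by
    simp [map_mul]; ring
  rw [this, Complex.conj_re]; exact h

lemma posre_of_close {a b : ℂ} (h : ‖b - a‖ < ‖a‖) :
    0 < ((starRingEnd ℂ) a * b).re := by
  have ha : a ≠ 0 := by
    intro h0; rw [h0] at h; simp at h
    exact absurd h (norm_nonneg _).not_gt
  have h1 : (starRingEnd ℂ) a * b = (starRingEnd ℂ) a * a + (starRingEnd ℂ) a * (b - a) := by ring
  have h2 : ((starRingEnd ℂ) a * a).re = ‖a‖ ^ 2 := by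
    rw [show (starRingEnd ℂ) a * a = a * (starRingEnd ℂ) a by ring, Complex.mul_conj]
    simp [Complex.normSq_eq_norm_sq]
    norm_cast
  have h3 : |((starRingEnd ℂ) a * (b - a)).re| ≤ ‖a‖ * ‖b - a‖ := by
    calc |((starRingEnd ℂ) a * (b - a)).re| ≤ ‖(starRingEnd ℂ) a * (b - a)‖ :=
          Complex.abs_re_le_norm _
      _ = ‖a‖ * ‖b - a‖ := by rw [norm_mul, Complex.norm_conj]
  have h4 : -(‖a‖ * ‖b - a‖) ≤ ((starRingEnd ℂ) a * (b - a)).re :=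
    neg_le_of_abs_le h3 |>.trans_eq rfl
  have ha' : 0 < ‖a‖ := norm_pos_iff.mpr ha
  rw [h1, Complex.add_re, h2]
  nlinarith [h4]

lemma ne_zero_left {a b : ℂ} (h : 0 < ((starRingEnd ℂ) a * b).re) : a ≠ 0 := by
  rintro rfl; simp at h
lemma ne_zero_right {a b : ℂ} (h : 0 < ((starRingEnd ℂ) a * b).re) : b ≠ 0 := by
  rintro rfl; simp at h

lemma abs_tturn_lt {a b : ℂ} (h : 0 < ((starRingEnd ℂ) a * b).re) :
    |tturn a b| < Real.pi / 2 := by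
  rw [tturn, Complex.abs_arg_lt_pi_div_two_iff]; exact Or.inl h

lemma tturn_coe {a b : ℂ} (ha : a ≠ 0) (hb : b ≠ 0) :
    (tturn a b : Real.Angle) = ((b.arg : Real.Angle) - (a.arg : Real.Angle)) := by
  rw [tturn, Complex.arg_mul_coe_angle (by simpa using ha) hb, Complex.arg_conj_coe_angle]
  abel

lemma tturn_antisymm {a b : ℂ} (h : 0 < ((starRingEnd ℂ) a * b).re) :
    tturn b a = - tturn a b := by
  have hc : (starRingEnd ℂ) b * a = (starRingEnd ℂ) ((starRingEnd ℂ) a * b) := by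
    simp [map_mul]; ring
  rw [tturn, tturn, hc, Complex.arg_conj]
  have : ((starRingEnd ℂ) a * b).arg ≠ Real.pi := by
    intro hpi
    have := Complex.arg_eq_pi_iff.mp hpi
    linarith [this.1]
  simp [this]

lemma int_vanish {d : ℝ} (hd : (d : Real.Angle) = ((0:ℝ) : Real.Angle))
    (hb : |d| < 2 * Real.pi) : d = 0 := by
  obtain ⟨k, hk⟩ := Real.Angle.angle_eq_iff_two_pi_dvd_sub.mp hd
  rw [sub_zero] at hk
  rcases eq_or_ne k 0 with rfl | hk0
  · simpa using hk
  · exfalso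
    have h1 : (1 : ℝ) ≤ |(k : ℝ)| := by exact_mod_cast Int.one_le_abs hk0
    have : |d| = 2 * Real.pi * |(k : ℝ)| := by
      rw [hk, abs_mul, abs_mul]
      simp [abs_of_pos Real.pi_pos, abs_of_pos, Real.pi_pos.le]
    nlinarith [Real.pi_pos]

lemma quad {a b c d : ℂ} (hab : 0 < ((starRingEnd ℂ) a * b).re)
    (hbc : 0 < ((starRingEnd ℂ) b * c).re) (hcd : 0 < ((starRingEnd ℂ) c * d).re)
    (hda : 0 < ((starRingEnd ℂ) d * a).re) :
    tturn a b + tturn b c + tturn c d + tturn d a = 0 := by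
  have ha := ne_zero_left hab; have hb := ne_zero_right hab
  have hc := ne_zero_right hbc; have hd := ne_zero_right hcd
  apply int_vanish
  · rw [Real.Angle.coe_add, Real.Angle.coe_add, Real.Angle.coe_add,
      tturn_coe ha hb, tturn_coe hb hc, tturn_coe hc hd, tturn_coe hd ha, Real.Angle.coe_zero]
    abel
  · have h1 := abs_tturn_lt hab; have h2 := abs_tturn_lt hbc
    have h3 := abs_tturn_lt hcd; have h4 := abs_tturn_lt hda
    have := abs_add_le (tturn a b + tturn b c + tturn c d) (tturn d a)
    have := abs_add_le (tturn a b + tturn b c) (tturn c d)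
    have := abs_add_le (tturn a b) (tturn b c)
    nlinarith [Real.pi_pos]

lemma step {c a b : ℂ} (hca : 0 < ((starRingEnd ℂ) c * a).re)
    (hcb : 0 < ((starRingEnd ℂ) c * b).re) (hab : 0 < ((starRingEnd ℂ) a * b).re) :
    tturn a b = tturn c b - tturn c a := by
  have ha := ne_zero_left hab; have hb := ne_zero_right hab
  have hc := ne_zero_left hca
  have key : tturn a b - (tturn c b - tturn c a) = 0 := by
    apply int_vanish
    · rw [Real.Angle.coe_sub, Real.Angle.coe_sub,
        tturn_coe ha hb, tturn_coe hc hb, tturn_coe hc ha, Real.Angle.coe_zero]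
      abel
    · have h1 := abs_tturn_lt hab; have h2 := abs_tturn_lt hca
      have h3 := abs_tturn_lt hcb
      have := abs_sub (tturn a b) (tturn c b - tturn c a)
      have := abs_sub (tturn c b) (tturn c a)
      nlinarith [Real.pi_pos]
  linarith [key]

lemma sum_turn (c : ℂ) (f : ℕ → ℂ) (n : ℕ)
    (hc : ∀ j ≤ n, 0 < ((starRingEnd ℂ) c * f j).re)
    (hs : ∀ j < n, 0 < ((starRingEnd ℂ) (f j) * f (j+1)).re) :
    ∑ j ∈ Finset.range n, tturn (f j) (f (j+1)) = tturn c (f n) - tturn c (f 0) := by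
  induction n with
  | zero => simp
  | succ m ih =>
    rw [Finset.sum_range_succ, ih (fun j hj => hc j (hj.trans m.le_succ))
      (fun j hj => hs j (hj.trans m.lt_succ_self)),
      step (hc m m.le_succ) (hc (m+1) le_rfl) (hs m m.lt_succ_self)]
    ring

lemma grid (n : ℕ) (g : ℕ → ℕ → ℂ)
    (hH : ∀ j k, j < n → k ≤ n → 0 < ((starRingEnd ℂ) (g j k) * g (j+1) k).re)
    (hV : ∀ j k, j ≤ n → k < n → 0 < ((starRingEnd ℂ) (g j k) * g j (k+1)).re) :
    (∑ j ∈ Finset.range n, tturn (g j 0) (g (j+1) 0))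
    + (∑ k ∈ Finset.range n, tturn (g n k) (g n (k+1)))
    - (∑ j ∈ Finset.range n, tturn (g j n) (g (j+1) n))
    - (∑ k ∈ Finset.range n, tturn (g 0 k) (g 0 (k+1))) = 0 := by
  have row : ∀ k, k < n → ∀ m, m ≤ n →
      (∑ j ∈ Finset.range m, tturn (g j k) (g (j+1) k))
      + tturn (g m k) (g m (k+1))
      - (∑ j ∈ Finset.range m, tturn (g j (k+1)) (g (j+1) (k+1)))
      - tturn (g 0 k) (g 0 (k+1)) = 0 := by
    intro k hk m
    induction m with
    | zero => simp
    | succ m ih =>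
      intro hm
      have hm' : m ≤ n := (Nat.le_succ m).trans hm
      have hmn : m < n := hm
      have hcell := quad (hH m k hmn hk.le) (hV (m+1) k hm hk)
        (posre_symm (hH m (k+1) hmn hk)) (posre_symm (hV m k hm' hk))
      rw [tturn_antisymm (hH m (k+1) hmn hk), tturn_antisymm (hV m k hm' hk)] at hcell
      have := ih hm'
      rw [Finset.sum_range_succ, Finset.sum_range_succ]
      linarith
  have rows : ∀ k ∈ Finset.range n,
      (∑ j ∈ Finset.range n, tturn (g j k) (g (j+1) k))
      - (∑ j ∈ Finset.range n, tturn (g j (k+1)) (g (j+1) (k+1)))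
      + (tturn (g n k) (g n (k+1)) - tturn (g 0 k) (g 0 (k+1))) = 0 := by
    intro k hk
    have := row k (Finset.mem_range.mp hk) n le_rfl
    linarith
  have hsum := Finset.sum_congr rfl rows
  rw [Finset.sum_const, smul_zero] at hsum
  rw [Finset.sum_add_distrib, Finset.sum_sub_distrib, Finset.sum_sub_distrib] at hsum
  have tel : (∑ x ∈ Finset.range n, ∑ j ∈ Finset.range n, tturn (g j x) (g (j+1) x))
      - (∑ x ∈ Finset.range n, ∑ j ∈ Finset.range n, tturn (g j (x+1)) (g (j+1) (x+1)))
      = (∑ j ∈ Finset.range n, tturn (g j 0) (g (j+1) 0))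
        - (∑ j ∈ Finset.range n, tturn (g j n) (g (j+1) n)) := by
    rw [← Finset.sum_sub_distrib,
      Finset.sum_range_sub' (fun k => ∑ j ∈ Finset.range n, tturn (g j k) (g (j+1) k)) n]
  linarith

lemma conj_cE (x : ℝ) : (starRingEnd ℂ) (cE x) = cE (-x) := by
  rw [cE, ← Complex.exp_conj, map_mul, Complex.conj_I, Complex.conj_ofReal, cE]
  push_cast; ring_nf

lemma conj_cE_mul (x y : ℝ) : (starRingEnd ℂ) (cE x) * cE y = cE (y - x) := by
  rw [conj_cE, cE_mul]; ring_nf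

lemma halfplane {p z : ℂ} (hp : ‖p‖ = 1) (hz : ‖z‖ ≤ 1) (hne : z ≠ p) :
    0 < ((starRingEnd ℂ) p * (p - z)).re := by
  have hpp : (starRingEnd ℂ) p * p = 1 := by
    rw [show (starRingEnd ℂ) p * p = p * (starRingEnd ℂ) p by ring, Complex.mul_conj,
      Complex.normSq_eq_norm_sq, hp]
    norm_num
  have hlt : ((starRingEnd ℂ) p * z).re < 1 := by
    by_contra hge
    push_neg at hge
    set w := (starRingEnd ℂ) p * z with hw
    have habsw : ‖w‖ ≤ 1 := by
      rw [hw, norm_mul, Complex.norm_conj, hp, one_mul]; exact hz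
    have hrw : w.re ≤ ‖w‖ := Complex.re_le_norm w
    have h1 : w.re = 1 := le_antisymm (hrw.trans habsw) hge
    have h2 : ‖w‖ = 1 := le_antisymm habsw (by linarith)
    have him : w.im = 0 := by
      have := Complex.sq_norm w
      rw [h2, Complex.normSq_apply, h1] at this
      nlinarith
    have hw1 : w = 1 := by
      apply Complex.ext <;> simp [h1, him]
    have : z = p := by
      calc z = 1 * z := (one_mul z).symm
        _ = ((starRingEnd ℂ) p * p) * z := by rw [hpp]
        _ = p * ((starRingEnd ℂ) p * z) := by ring
        _ = p * 1 := by rw [← hw, hw1]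
        _ = p := mul_one p
    exact hne this
  have : ((starRingEnd ℂ) p * (p - z)).re
      = ((starRingEnd ℂ) p * p).re - ((starRingEnd ℂ) p * z).re := by
    rw [show (starRingEnd ℂ) p * (p - z) = (starRingEnd ℂ) p * p - (starRingEnd ℂ) p * z by ring,
      Complex.sub_re]
  rw [this, hpp]
  simp only [Complex.one_re]
  linarith

lemma one_sub_cE (δ : ℝ) :
    1 - cE δ = ((2 * Real.sin (δ/2) : ℝ) : ℂ) * cE (δ/2 - Real.pi/2) := by
  have h1 : cE (δ/2 - Real.pi/2) = cE (δ/2) * (-Complex.I) := by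
    rw [show δ/2 - Real.pi/2 = δ/2 + -(Real.pi/2) by ring, ← cE_mul]
    congr 1
    rw [cE, Complex.exp_mul_I]
    push_cast
    simp [Real.cos_pi_div_two, Real.sin_pi_div_two]
  have h2 : cE δ = cE (δ/2) * cE (δ/2) := by rw [cE_mul]; ring_nf
  have hw : cE (δ/2) = ((Real.cos (δ/2) : ℝ) : ℂ) + ((Real.sin (δ/2) : ℝ) : ℂ) * Complex.I := by
    rw [cE, Complex.exp_mul_I, Complex.ofReal_cos, Complex.ofReal_sin]
  have hcs : ((Real.cos (δ/2) : ℝ) : ℂ)^2 + ((Real.sin (δ/2) : ℝ) : ℂ)^2 = 1 := by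
    exact_mod_cast congrArg (fun r : ℝ => (r : ℂ)) (Real.cos_sq_add_sin_sq (δ/2))
  rw [h1, h2, hw, Complex.ofReal_mul, Complex.ofReal_ofNat]
  linear_combination (-1 : ℂ) * hcs + ((Real.sin (δ/2) : ℝ) : ℂ)^2 * Complex.I_sq

lemma arg_one_sub_cE_pos {δ : ℝ} (h0 : 0 < δ) (h2 : δ < 2 * Real.pi) :
    (1 - cE δ).arg = δ/2 - Real.pi/2 := by
  rw [one_sub_cE δ]
  have hs : 0 < 2 * Real.sin (δ/2) := by
    have := Real.sin_pos_of_pos_of_lt_pi (x := δ/2) (by linarith) (by linarith)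
    linarith
  rw [Complex.arg_real_mul (cE (δ/2 - Real.pi/2)) hs, cE, Complex.exp_mul_I]
  exact Complex.arg_cos_add_sin_mul_I
    ⟨by linarith [Real.pi_pos], by linarith [Real.pi_pos]⟩

lemma corner_pos {x y : ℝ} (h0 : 0 < y - x) (h2 : y - x < 2 * Real.pi) :
    ((starRingEnd ℂ) (cE x) * (cE x - cE y)).arg = (y - x)/2 - Real.pi/2 := by
  have : (starRingEnd ℂ) (cE x) * (cE x - cE y) = 1 - cE (y - x) := by
    rw [mul_sub, conj_cE_mul, conj_cE_mul, sub_self]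
    norm_num [cE]
  rw [this, arg_one_sub_cE_pos h0 h2]

lemma corner_neg {x y : ℝ} (h0 : y - x < 0) (h2 : -(2 * Real.pi) < y - x) :
    ((starRingEnd ℂ) (cE x) * (cE x - cE y)).arg = (y - x)/2 + Real.pi/2 := by
  have inner : (starRingEnd ℂ) (cE y) * (cE y - cE x) = 1 - cE (x - y) := by
    rw [mul_sub, conj_cE_mul, conj_cE_mul, sub_self]
    norm_num [cE]
  have lhs : (starRingEnd ℂ) (cE x) * (cE x - cE y) = 1 - cE (y - x) := by
    rw [mul_sub, conj_cE_mul, conj_cE_mul, sub_self]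
    norm_num [cE]
  have key : (starRingEnd ℂ) (cE x) * (cE x - cE y)
      = (starRingEnd ℂ) ((starRingEnd ℂ) (cE y) * (cE y - cE x)) := by
    rw [inner, lhs, map_sub, map_one, conj_cE, show -(x - y) = y - x by ring]
  have hpos := corner_pos (x := y) (y := x) (by linarith) (by linarith)
  have hne : ((starRingEnd ℂ) (cE y) * (cE y - cE x)).arg ≠ Real.pi := by
    rw [hpos]
    intro h
    have := Real.pi_pos
    nlinarith
  rw [key, Complex.arg_conj]
  simp only [hne, if_false]
  rw [hpos]
  ring

lemma crossing (u₁ u₂ v₁ v₂ : ℝ)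
    (h1 : u₁ < u₂) (h2 : u₂ < v₁) (h3 : v₁ < v₂) (h4 : v₂ < u₁ + 2*Real.pi)
    (γ₁ γ₂ : ℝ → ℂ)
    (hγ₁cont : ContinuousOn γ₁ (Icc 0 1))
    (hγ₁D : ∀ x ∈ Icc (0:ℝ) 1, ‖γ₁ x‖ ≤ 1)
    (hγ₁0 : γ₁ 0 = cE u₁) (hγ₁1 : γ₁ 1 = cE v₁)
    (hγ₂cont : ContinuousOn γ₂ (Icc 0 1))
    (hγ₂D : ∀ x ∈ Icc (0:ℝ) 1, ‖γ₂ x‖ ≤ 1)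
    (hγ₂0 : γ₂ 0 = cE u₂) (hγ₂1 : γ₂ 1 = cE v₂) :
    ∃ x ∈ Icc (0:ℝ) 1, ∃ y ∈ Icc (0:ℝ) 1, γ₁ x = γ₂ y := by
  by_contra hcon
  push_neg at hcon
  -- setup
  set K : Set (ℝ × ℝ) := Set.Icc (0:ℝ) 1 ×ˢ Set.Icc (0:ℝ) 1 with hKdef
  have hK : IsCompact K := isCompact_Icc.prod isCompact_Icc
  set Γ : ℝ × ℝ → ℂ := fun p => γ₂ p.2 - γ₁ p.1 with hΓdef
  have hΓ : ContinuousOn Γ K := by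
    apply ContinuousOn.sub
    · exact hγ₂cont.comp continuous_snd.continuousOn (fun p hp => hp.2)
    · exact hγ₁cont.comp continuous_fst.continuousOn (fun p hp => hp.1)
  have hKne : K.Nonempty := ⟨(0,0), by
    constructor <;> exact ⟨le_refl (0:ℝ), zero_le_one⟩⟩
  obtain ⟨p₀, hp₀K, hmin'⟩ :=
    hK.exists_isMinOn hKne (continuous_norm.comp_continuousOn hΓ)
  have hmin : ∀ p ∈ K, ‖Γ p₀‖ ≤ ‖Γ p‖ := fun p hp => hmin' hp
  set m : ℝ := ‖Γ p₀‖ with hmdef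
  have hΓne : ∀ p ∈ K, Γ p ≠ 0 := by
    intro p hp
    exact sub_ne_zero_of_ne (Ne.symm (hcon p.1 hp.1 p.2 hp.2))
  have hm : 0 < m := by
    rw [hmdef]
    exact norm_pos_iff.mpr (hΓne p₀ hp₀K)
  have hu := hK.uniformContinuousOn_of_continuous hΓ
  rw [Metric.uniformContinuousOn_iff] at hu
  obtain ⟨δ, hδpos, hδ⟩ := hu m hm
  obtain ⟨n, hn⟩ := exists_nat_gt (1/δ)
  have hn0 : 0 < (n:ℝ) := lt_trans (by positivity) hn
  have hstep : (1:ℝ)/n < δ := by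
    rw [div_lt_iff₀ hn0]
    rw [div_lt_iff₀ hδpos] at hn
    linarith [mul_comm δ (n:ℝ) ▸ hn]
  have hmem : ∀ j : ℕ, j ≤ n → (j:ℝ)/n ∈ Icc (0:ℝ) 1 := by
    intro j hj
    constructor
    · positivity
    · rw [div_le_one hn0]; exact_mod_cast hj
  set g : ℕ → ℕ → ℂ := fun j k => γ₂ ((k:ℝ)/n) - γ₁ ((j:ℝ)/n) with hgdef
  have hgΓ : ∀ j k, g j k = Γ (((j:ℝ)/n), ((k:ℝ)/n)) := fun j k => rfl
  have hgK : ∀ j k, j ≤ n → k ≤ n → (((j:ℝ)/n), ((k:ℝ)/n)) ∈ K :=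
    fun j k hj hk => ⟨hmem j hj, hmem k hk⟩
  have hgm : ∀ j k, j ≤ n → k ≤ n → m ≤ ‖g j k‖ := by
    intro j k hj hk
    rw [hgΓ]
    exact hmin _ (hgK j k hj hk)
  have hclose : ∀ j k j' k', j ≤ n → k ≤ n → j' ≤ n → k' ≤ n →
      dist ((j':ℝ)/n) ((j:ℝ)/n) ≤ 1/n → dist ((k':ℝ)/n) ((k:ℝ)/n) ≤ 1/n →
      ‖g j' k' - g j k‖ < m := by
    intro j k j' k' hj hk hj' hk' hdj hdk
    rw [hgΓ, hgΓ, ← Complex.dist_eq]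
    apply hδ _ (hgK j' k' hj' hk') _ (hgK j k hj hk)
    rw [Prod.dist_eq]
    exact lt_of_le_of_lt (max_le hdj hdk) hstep
  have hadjH : ∀ j : ℕ, dist (((j+1:ℕ):ℝ)/n) ((j:ℝ)/n) ≤ 1/n := by
    intro j
    rw [Real.dist_eq]
    have : ((j+1:ℕ):ℝ)/n - (j:ℝ)/n = 1/n := by
      push_cast; field_simp; ring
    rw [this, _root_.abs_of_nonneg (by positivity : (0:ℝ) ≤ 1/(n:ℝ))]
  have hadj0 : ∀ j : ℕ, dist ((j:ℝ)/n) ((j:ℝ)/n) ≤ 1/n := by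
    intro j
    simp only [dist_self]
    positivity
  have hH : ∀ j k, j < n → k ≤ n → 0 < ((starRingEnd ℂ) (g j k) * g (j+1) k).re := by
    intro j k hj hk
    exact posre_of_close (lt_of_lt_of_le
      (hclose j k (j+1) k hj.le hk hj hk (hadjH j) (hadj0 k)) (hgm j k hj.le hk))
  have hV : ∀ j k, j ≤ n → k < n → 0 < ((starRingEnd ℂ) (g j k) * g j (k+1)).re := by
    intro j k hj hk
    exact posre_of_close (lt_of_lt_of_le
      (hclose j k j (k+1) hj hk.le hj hk (hadj0 j) (hadjH k)) (hgm j k hj hk.le))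
  -- edge values
  have hc0 : ((0:ℕ):ℝ)/n = (0:ℝ) := by simp
  have hcn : ((n:ℕ):ℝ)/n = (1:ℝ) := by
    field_simp
  have hg_j0 : ∀ j : ℕ, g j 0 = γ₂ 0 - γ₁ ((j:ℝ)/n) := by
    intro j; rw [hgdef]; simp
  have hg_jn : ∀ j : ℕ, g j n = γ₂ 1 - γ₁ ((j:ℝ)/n) := by
    intro j; rw [hgdef]; simp [hcn]
  have hg_0k : ∀ k : ℕ, g 0 k = γ₂ ((k:ℝ)/n) - γ₁ 0 := by
    intro k; rw [hgdef]; simp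
  have hg_nk : ∀ k : ℕ, g n k = γ₂ ((k:ℝ)/n) - γ₁ 1 := by
    intro k; rw [hgdef]; simp [hcn]
  -- half-plane conditions on the four edges
  have hcb : ∀ j ≤ n, 0 < ((starRingEnd ℂ) (γ₂ 0) * g j 0).re := by
    intro j hj
    rw [hg_j0]
    exact halfplane (by rw [hγ₂0]; exact cE_abs u₂) (hγ₁D _ (hmem j hj))
      (hcon _ (hmem j hj) 0 ⟨le_refl 0, zero_le_one⟩)
  have hct : ∀ j ≤ n, 0 < ((starRingEnd ℂ) (γ₂ 1) * g j n).re := by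
    intro j hj
    rw [hg_jn]
    exact halfplane (by rw [hγ₂1]; exact cE_abs v₂) (hγ₁D _ (hmem j hj))
      (hcon _ (hmem j hj) 1 ⟨zero_le_one, le_refl 1⟩)
  have hneg : ∀ (q z : ℂ), (starRingEnd ℂ) (-q) * (z - q) = (starRingEnd ℂ) q * (q - z) := by
    intro q z; rw [map_neg]; ring
  have hcr : ∀ k ≤ n, 0 < ((starRingEnd ℂ) (-(γ₁ 1)) * g n k).re := by
    intro k hk
    rw [hg_nk, hneg]
    exact halfplane (by rw [hγ₁1]; exact cE_abs v₁) (hγ₂D _ (hmem k hk))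
      (fun h => hcon 1 ⟨zero_le_one, le_refl 1⟩ _ (hmem k hk) h.symm)
  have hcl : ∀ k ≤ n, 0 < ((starRingEnd ℂ) (-(γ₁ 0)) * g 0 k).re := by
    intro k hk
    rw [hg_0k, hneg]
    exact halfplane (by rw [hγ₁0]; exact cE_abs u₁) (hγ₂D _ (hmem k hk))
      (fun h => hcon 0 ⟨le_refl 0, zero_le_one⟩ _ (hmem k hk) h.symm)
  -- edge sums
  have hB := sum_turn (γ₂ 0) (fun j => g j 0) n hcb (fun j hj => hH j 0 hj n.zero_le)
  have hT := sum_turn (γ₂ 1) (fun j => g j n) n hct (fun j hj => hH j n hj le_rfl)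
  have hR := sum_turn (-(γ₁ 1)) (fun k => g n k) n hcr (fun k hk => hV n k le_rfl hk)
  have hL := sum_turn (-(γ₁ 0)) (fun k => g 0 k) n hcl (fun k hk => hV 0 k n.zero_le hk)
  have hgrid := grid n g hH hV
  rw [hB, hR, hT, hL] at hgrid
  -- corner values
  have pi2 : v₁ - u₂ < 2 * Real.pi := by linarith
  have c1 : tturn (γ₂ 0) (g n 0) = (v₁ - u₂)/2 - Real.pi/2 := by
    rw [tturn, hg_nk 0, hc0, hγ₂0, hγ₁1]
    exact corner_pos (by linarith) (by linarith)
  have c2 : tturn (γ₂ 0) (g 0 0) = (u₁ - u₂)/2 + Real.pi/2 := by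
    rw [tturn, hg_j0 0, hc0, hγ₂0, hγ₁0]
    exact corner_neg (by linarith) (by linarith)
  have c3 : tturn (γ₂ 1) (g n n) = (v₁ - v₂)/2 + Real.pi/2 := by
    rw [tturn, hg_nk n, hcn, hγ₂1, hγ₁1]
    exact corner_neg (by linarith) (by linarith)
  have c4 : tturn (γ₂ 1) (g 0 n) = (u₁ - v₂)/2 + Real.pi/2 := by
    rw [tturn, hg_jn 0, hc0, hγ₂1, hγ₁0]
    exact corner_neg (by linarith) (by linarith)
  have c5 : tturn (-(γ₁ 1)) (g n n) = (v₂ - v₁)/2 - Real.pi/2 := by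
    rw [tturn, hg_nk n, hcn, hneg, hγ₂1, hγ₁1]
    exact corner_pos (by linarith) (by linarith)
  have c6 : tturn (-(γ₁ 1)) (g n 0) = (u₂ - v₁)/2 + Real.pi/2 := by
    rw [tturn, hg_nk 0, hc0, hneg, hγ₂0, hγ₁1]
    exact corner_neg (by linarith) (by linarith)
  have c7 : tturn (-(γ₁ 0)) (g 0 n) = (v₂ - u₁)/2 - Real.pi/2 := by
    rw [tturn, hg_0k n, hcn, hneg, hγ₂1, hγ₁0]
    exact corner_pos (by linarith) (by linarith)
  have c8 : tturn (-(γ₁ 0)) (g 0 0) = (u₂ - u₁)/2 - Real.pi/2 := by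
    rw [tturn, hg_0k 0, hc0, hneg, hγ₂0, hγ₁0]
    exact corner_pos (by linarith) (by linarith)
  rw [c1, c2, c3, c4, c5, c6, c7, c8] at hgrid
  have hpi := Real.pi_pos
  linarith

lemma cE_ne_one {x : ℝ} (h0 : x ≠ 0) (h2 : |x| < 2*Real.pi) : cE x ≠ 1 := by
  intro h
  rw [cE, Complex.exp_eq_one_iff] at h
  obtain ⟨k, hk⟩ := h
  have hx : (x:ℂ) = (k:ℂ) * (2*(Real.pi:ℂ)) := by
    have := mul_right_cancel₀ Complex.I_ne_zero (by rw [hk]; ring :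
      (x:ℂ) * Complex.I = ((k:ℂ) * (2*(Real.pi:ℂ))) * Complex.I)
    exact this
  have hxr : x = (k:ℝ) * (2*Real.pi) := by exact_mod_cast hx
  rcases eq_or_ne k 0 with rfl | hk0
  · simp at hxr; exact h0 hxr
  · have h1 : (1:ℝ) ≤ |(k:ℝ)| := by exact_mod_cast Int.one_le_abs hk0
    have : |x| = |(k:ℝ)| * (2*Real.pi) := by
      rw [hxr, abs_mul, _root_.abs_of_nonneg (by positivity : (0:ℝ) ≤ 2*Real.pi)]
    nlinarith [Real.pi_pos]

lemma circle_param {a z : ℂ} (ha : ‖a‖ = 1) (hz : ‖z‖ = 1) (hne : z ≠ a) :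
    ∃ δ : ℝ, 0 < δ ∧ δ < 2*Real.pi ∧ z = a * cE δ := by
  have ha0 : a ≠ 0 := by intro h; rw [h] at ha; simp at ha
  set w := (starRingEnd ℂ) a * z with hw
  have haa : a * (starRingEnd ℂ) a = 1 := by
    rw [Complex.mul_conj, Complex.normSq_eq_norm_sq, ha]; norm_num
  have hzw : z = a * w := by
    rw [hw]
    calc z = 1 * z := (one_mul z).symm
      _ = (a * (starRingEnd ℂ) a) * z := by rw [haa]
      _ = a * ((starRingEnd ℂ) a * z) := by ring
  have hwabs : ‖w‖ = 1 := by
    rw [hw, norm_mul, Complex.norm_conj, ha, hz]; norm_num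
  have hw1 : w ≠ 1 := by
    intro h
    rw [h, mul_one] at hzw
    exact hne hzw
  have hwcE' : w = cE w.arg := by
    rw [cE]
    conv_lhs => rw [← Complex.norm_mul_exp_arg_mul_I w]
    rw [hwabs]
    norm_num
  have harg0 : w.arg ≠ 0 := by
    intro h
    rw [hwcE', h] at hw1
    apply hw1
    simp [cE]
  obtain ⟨θ, hθ1, hθ2, hθ0, hwcE⟩ : ∃ θ : ℝ, -Real.pi < θ ∧ θ ≤ Real.pi ∧ θ ≠ 0 ∧ w = cE θ :=
    ⟨w.arg, Complex.neg_pi_lt_arg w, Complex.arg_le_pi w, harg0, hwcE'⟩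
  have h2pi : cE (2*Real.pi) = 1 := by
    rw [cE]
    push_cast
    exact Complex.exp_two_pi_mul_I
  rcases lt_or_gt_of_ne hθ0 with hneg | hpos
  · refine ⟨θ + 2*Real.pi, by linarith [Real.pi_pos], by linarith [Real.pi_pos], ?_⟩
    rw [hzw, hwcE, ← cE_mul, h2pi, mul_one]
  · exact ⟨θ, hpos, by linarith [Real.pi_pos], by rw [hzw, hwcE]⟩

lemma arc_comp_eq {a₁ b₁ : ℂ} {β l h : ℝ} (ha : ‖a₁‖ = 1)
    (hb : b₁ = a₁ * cE β) (hβ0 : 0 < β) (hβ2 : β < 2*Real.pi)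
    (hl : 0 ≤ l) (hh : h ≤ 2*Real.pi) (hβnot : β ∉ Set.Ioo l h)
    {x y : ℝ} (hx : x ∈ Set.Ioo l h) (hy : y ∈ Set.Ioo l h) :
    connectedComponentIn ({z : ℂ | ‖z‖ = 1} \ {a₁, b₁}) (a₁ * cE x)
    = connectedComponentIn ({z : ℂ | ‖z‖ = 1} \ {a₁, b₁}) (a₁ * cE y) := by
  have ha0 : a₁ ≠ 0 := by intro hq; rw [hq] at ha; simp at ha
  set f : ℝ → ℂ := fun r => a₁ * cE r with hf
  have hfc : Continuous f := by
    rw [hf]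
    exact continuous_const.mul
      (Complex.continuous_exp.comp (Complex.continuous_ofReal.mul continuous_const))
  set A : Set ℂ := f '' Set.Ioo l h with hA
  have hApre : IsPreconnected A := isPreconnected_Ioo.image f hfc.continuousOn
  have hsub : A ⊆ ({z : ℂ | ‖z‖ = 1} \ {a₁, b₁}) := by
    rintro _ ⟨r, hr, rfl⟩
    have hr0 : 0 < r := lt_of_le_of_lt hl hr.1
    have hr2 : r < 2*Real.pi := lt_of_lt_of_le hr.2 hh
    constructor
    · show ‖a₁ * cE r‖ = 1
      rw [norm_mul, ha, cE_abs, one_mul]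
    · intro hmem
      simp only [Set.mem_insert_iff, Set.mem_singleton_iff] at hmem
      rcases hmem with hc | hc
      · -- f r = a₁
        have hcc : a₁ * cE r = a₁ * 1 := by rw [mul_one]; exact hc
        have : cE r = 1 := mul_left_cancel₀ ha0 hcc
        exact cE_ne_one (ne_of_gt hr0)
          (by rw [_root_.abs_of_pos hr0]; exact hr2) this
      · -- f r = b₁
        have hcc : a₁ * cE r = a₁ * cE β := by rw [← hb]; exact hc
        have hEE : cE r = cE β := mul_left_cancel₀ ha0 hcc
        have hcE0 : cE β ≠ 0 := by
          intro hq
          have := cE_abs β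
          rw [hq] at this; simp at this
        have hone : cE (r - β) = 1 := by
          have h2 : cE β * cE (r - β) = cE β * 1 := by
            rw [cE_mul, show β + (r - β) = r by ring, mul_one, hEE]
          exact mul_left_cancel₀ hcE0 h2
        have hrβ : r ≠ β := by
          intro hq; rw [hq] at hr; exact hβnot hr
        exact cE_ne_one (sub_ne_zero_of_ne hrβ) (by
          rw [abs_sub_lt_iff]; constructor <;> linarith) hone
  have hxA : a₁ * cE x ∈ A := ⟨x, hx, rfl⟩
  have hyA : a₁ * cE y ∈ A := ⟨y, hy, rfl⟩
  exact connectedComponentIn_eq (hApre.subset_connectedComponentIn hxA hsub hyA)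

/-- If two paths in the closed unit disk join linked pairs of boundary points, and all
their common points are equal to a single point `w₁` of the first path and to a single
point `w₂` of the second path, then `w₁ = w₂`. -/
theorem linked_paths_common_landing_point
    (S D : Set ℂ) (hS : S = {z : ℂ | ‖z‖ = 1})
    (hD : D = {z : ℂ | ‖z‖ ≤ 1})
    (a₁ b₁ a₂ b₂ : ℂ)
    (ha₁ : a₁ ∈ S) (hb₁ : b₁ ∈ S) (ha₂ : a₂ ∈ S) (hb₂ : b₂ ∈ S)
    (hab : a₁ ≠ b₁) (haa : a₁ ≠ a₂) (hab' : a₁ ≠ b₂)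
    (hba : b₁ ≠ a₂) (hbb : b₁ ≠ b₂) (hab'' : a₂ ≠ b₂)
    (hlink : connectedComponentIn (S \ {a₁, b₁}) a₂ ≠
      connectedComponentIn (S \ {a₁, b₁}) b₂)
    (γ₁ γ₂ : ℝ → ℂ)
    (hγ₁cont : ContinuousOn γ₁ (Set.Icc 0 1))
    (hγ₁D : Set.MapsTo γ₁ (Set.Icc 0 1) D)
    (hγ₁0 : γ₁ 0 = a₁) (hγ₁1 : γ₁ 1 = b₁)
    (hγ₂cont : ContinuousOn γ₂ (Set.Icc 0 1))
    (hγ₂D : Set.MapsTo γ₂ (Set.Icc 0 1) D)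
    (hγ₂0 : γ₂ 0 = a₂) (hγ₂1 : γ₂ 1 = b₂)
    (w₁ w₂ : ℂ)
    (hw₁ : w₁ ∈ γ₁ '' Set.Icc 0 1) (hw₂ : w₂ ∈ γ₂ '' Set.Icc 0 1)
    (hcap₁ : γ₁ '' Set.Icc 0 1 ∩ γ₂ '' Set.Icc 0 1 ⊆ {w₁})
    (hcap₂ : γ₁ '' Set.Icc 0 1 ∩ γ₂ '' Set.Icc 0 1 ⊆ {w₂}) :
    w₁ = w₂ := by
  subst hS hD
  simp only [Set.mem_setOf_eq] at ha₁ hb₁ ha₂ hb₂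
  have hγ₁D' : ∀ x ∈ Set.Icc (0:ℝ) 1, ‖γ₁ x‖ ≤ 1 := fun x hx => hγ₁D hx
  have hγ₂D' : ∀ x ∈ Set.Icc (0:ℝ) 1, ‖γ₂ x‖ ≤ 1 := fun x hx => hγ₂D hx
  -- angles
  obtain ⟨β, hβ0, hβ2, hbeq⟩ := circle_param ha₁ hb₁ (Ne.symm hab)
  obtain ⟨s, hs0, hs2, haeq⟩ := circle_param ha₁ ha₂ (Ne.symm haa)
  obtain ⟨t, ht0, ht2, hteq⟩ := circle_param ha₁ hb₂ (Ne.symm hab')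
  have ha₁0 : a₁ ≠ 0 := by intro h; rw [h] at ha₁; simp at ha₁
  have hsβ : s ≠ β := by
    intro h
    rw [h] at haeq
    exact hba (hbeq.trans haeq.symm)
  have htβ : t ≠ β := by
    intro h
    rw [h] at hteq
    exact hbb (hbeq.trans hteq.symm)
  -- a₂ and b₂ are not in the same open arc
  have hnotsame : ¬ ((s < β ∧ t < β) ∨ (β < s ∧ β < t)) := by
    rintro (⟨h₁, h₂⟩ | ⟨h₁, h₂⟩)
    · apply hlink
      rw [haeq, hteq]
      exact arc_comp_eq ha₁ hbeq hβ0 hβ2 (le_refl 0) hβ2.le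
        (fun hmem => lt_irrefl β hmem.2) ⟨hs0, h₁⟩ ⟨ht0, h₂⟩
    · apply hlink
      rw [haeq, hteq]
      exact arc_comp_eq ha₁ hbeq hβ0 hβ2 hβ0.le (le_refl _)
        (fun hmem => lt_irrefl β hmem.1) ⟨h₁, hs2⟩ ⟨h₂, ht2⟩
  -- common point of the two path images
  have hkey : ∃ z, z ∈ γ₁ '' Set.Icc 0 1 ∩ γ₂ '' Set.Icc 0 1 := by
    obtain ⟨u₁, ha₁E⟩ : ∃ u : ℝ, a₁ = cE u := by
      refine ⟨a₁.arg, ?_⟩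
      conv_lhs => rw [← Complex.norm_mul_exp_arg_mul_I a₁]
      rw [ha₁, cE]
      norm_num
    have hmulE : ∀ r : ℝ, a₁ * cE r = cE (u₁ + r) := by
      intro r
      rw [← cE_mul, ← ha₁E]
    rcases lt_or_gt_of_ne hsβ with hsβ' | hsβ'
    · -- s < β, so β < t
      have htβ' : β < t := by
        rcases lt_or_gt_of_ne htβ with h | h
        · exact absurd (Or.inl ⟨hsβ', h⟩) hnotsame
        · exact h
      obtain ⟨x, hx, y, hy, hxy⟩ := crossing u₁ (u₁ + s) (u₁ + β) (u₁ + t)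
        (by linarith) (by linarith) (by linarith) (by linarith)
        γ₁ γ₂ hγ₁cont hγ₁D'
        (by rw [hγ₁0]; exact ha₁E)
        (by rw [hγ₁1, hbeq, hmulE])
        hγ₂cont hγ₂D'
        (by rw [hγ₂0, haeq, hmulE])
        (by rw [hγ₂1, hteq, hmulE])
      exact ⟨γ₁ x, ⟨x, hx, rfl⟩, ⟨y, hy, hxy.symm⟩⟩
    · -- β < s, so t < β
      have htβ' : t < β := by
        rcases lt_or_gt_of_ne htβ with h | h
        · exact h
        · exact absurd (Or.inr ⟨hsβ', h⟩) hnotsame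
      obtain ⟨x, hx, y, hy, hxy⟩ := crossing u₁ (u₁ + t) (u₁ + β) (u₁ + s)
        (by linarith) (by linarith) (by linarith) (by linarith)
        γ₁ (fun r => γ₂ (1 - r)) hγ₁cont hγ₁D'
        (by rw [hγ₁0]; exact ha₁E)
        (by rw [hγ₁1, hbeq, hmulE])
        (hγ₂cont.comp (continuous_const.sub continuous_id).continuousOn
          (fun r hr => ⟨by simp; linarith [hr.2], by simp; linarith [hr.1]⟩))
        (fun r hr => hγ₂D' (1 - r) ⟨by linarith [hr.2], by linarith [hr.1]⟩)
        (by simp only [sub_zero]; rw [hγ₂1, hteq, hmulE])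
        (by simp only [sub_self]; rw [hγ₂0, haeq, hmulE])
      exact ⟨γ₁ x, ⟨x, hx, rfl⟩, ⟨1 - y, ⟨by linarith [hy.2], by linarith [hy.1]⟩, hxy.symm⟩⟩
  obtain ⟨z, hz⟩ := hkey
  have hz1 : z = w₁ := hcap₁ hz
  have hz2 : z = w₂ := hcap₂ hz
  rw [← hz1, ← hz2]
end
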